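/- Fix ½ ≤ γ < ν ≤ 1 and 0 < μ < min[ν, ν²/γ − 3ν + 2]. For t ≤ 1 and r > 0, the function v₀(r,t) = ((1−t)_+ + r^{2ν})^{ν/(2γ)} / r^ν satisfies Δ_ν v₀ := (∂_r² + r^{-1}∂_r − ν² r^{-2}) v₀ ≤ 0, i.e. v₀ is a supersolution of the elliptic operator Δ_ν. Explicitly, Δ_ν v₀ = (ν³/γ²) v₀ · r^{4ν−2}(ν − 2γ)/((1−t) + r^{2ν})² ≤ 0. -/

import Mathlib

/-!
Write `v₀ = r^{-ν} g(r^{2ν})` with `g(s) = (c + s)^a`, `c = (1-t)₊`, `a = ν/(2γ)`.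
For any `g`, conjugating by `r^{-ν}` turns `Δ_ν` into `∂_r² + (1-2ν) r⁻¹ ∂_r`, and the
substitution `s = r^{2ν}` turns this into `(2ν r^{2ν-1})² ∂_s²`, so
`Δ_ν v₀ = r^{-ν} (2ν r^{2ν-1})² a (a-1) (c + r^{2ν})^{a-2}`.
This is `≤ 0` because `0 < a ≤ 1`, i.e. `0 < ν ≤ 2γ`.
-/

open Filter Topology

noncomputable def v0fun (ν γ t r : ℝ) : ℝ :=
  (max (1 - t) 0 + r ^ (2 * ν)) ^ (ν / (2 * γ)) / r ^ ν

noncomputable def besselLaplacian (ν : ℝ) (f : ℝ → ℝ) (r : ℝ) : ℝ :=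
  deriv (deriv f) r + r⁻¹ * deriv f r - ν ^ 2 / r ^ 2 * f r

theorem besselLaplacian_congr {ν r : ℝ} {f g : ℝ → ℝ} (h : f =ᶠ[𝓝 r] g) :
    besselLaplacian ν f r = besselLaplacian ν g r := by
  unfold besselLaplacian
  rw [h.deriv.deriv_eq, h.deriv_eq, h.eq_of_nhds]

theorem besselLaplacian_eq_of_hasDerivAt {ν r f'' : ℝ} {f f' : ℝ → ℝ}
    (hf : ∀ᶠ x in 𝓝 r, HasDerivAt f (f' x) x) (hf' : HasDerivAt f' f'' r) :
    besselLaplacian ν f r = f'' + r⁻¹ * f' r - ν ^ 2 / r ^ 2 * f r := by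
  have hderiv : deriv f =ᶠ[𝓝 r] f' := hf.mono fun x hx => hx.deriv
  unfold besselLaplacian
  rw [hderiv.deriv_eq, hf'.deriv, hf.self_of_nhds.deriv]

theorem besselLaplacian_rpow_mul {ν p r h'' : ℝ} {h h' : ℝ → ℝ} (hr : 0 < r)
    (hh : ∀ᶠ x in 𝓝 r, HasDerivAt h (h' x) x) (hh' : HasDerivAt h' h'' r) :
    besselLaplacian ν (fun x => x ^ p * h x) r =
      r ^ p * (h'' + (2 * p + 1) / r * h' r + (p ^ 2 - ν ^ 2) / r ^ 2 * h r) := by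
  have hu : ∀ᶠ x in 𝓝 r, HasDerivAt (fun x => x ^ p * h x)
      (p * x ^ (p - 1) * h x + x ^ p * h' x) x := by
    filter_upwards [hh, Ioi_mem_nhds hr] with x hx hx0
    exact (Real.hasDerivAt_rpow_const (Or.inl (ne_of_gt hx0))).mul hx
  have hu' : HasDerivAt (fun x => p * x ^ (p - 1) * h x + x ^ p * h' x)
      (p * ((p - 1) * r ^ (p - 1 - 1)) * h r + p * r ^ (p - 1) * h' r
        + (p * r ^ (p - 1) * h' r + r ^ p * h'')) r :=
    (((Real.hasDerivAt_rpow_const (Or.inl hr.ne')).const_mul p).mul hh.self_of_nhds).add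
      ((Real.hasDerivAt_rpow_const (Or.inl hr.ne')).mul hh')
  rw [besselLaplacian_eq_of_hasDerivAt hu hu']
  simp only [Real.rpow_sub_one hr.ne']
  field_simp
  ring

theorem hasDerivAt_comp_rpow {q r : ℝ} {g g' : ℝ → ℝ} (hr : 0 < r)
    (hg : ∀ᶠ s in 𝓝 (r ^ q), HasDerivAt g (g' s) s) :
    ∀ᶠ x in 𝓝 r, HasDerivAt (fun x => g (x ^ q)) (q * x ^ (q - 1) * g' (x ^ q)) x := by
  filter_upwards [(Real.continuousAt_rpow_const r q (Or.inl hr.ne')).eventually hg,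
    Ioi_mem_nhds hr] with x hx hx0
  rw [mul_comm]
  exact hx.comp x (Real.hasDerivAt_rpow_const (Or.inl (ne_of_gt hx0)))

theorem besselLaplacian_rpow_neg_mul_comp_rpow {ν r g'' : ℝ} {g g' : ℝ → ℝ} (hr : 0 < r)
    (hg : ∀ᶠ s in 𝓝 (r ^ (2 * ν)), HasDerivAt g (g' s) s)
    (hg' : HasDerivAt g' g'' (r ^ (2 * ν))) :
    besselLaplacian ν (fun x => x ^ (-ν) * g (x ^ (2 * ν))) r =
      r ^ (-ν) * (2 * ν * r ^ (2 * ν - 1)) ^ 2 * g'' := by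
  have hcomp : HasDerivAt (fun x => g' (x ^ (2 * ν))) (2 * ν * r ^ (2 * ν - 1) * g'') r :=
    (hg'.comp r (Real.hasDerivAt_rpow_const (Or.inl hr.ne'))).congr_deriv (mul_comm _ _)
  have hh' : HasDerivAt (fun x => 2 * ν * x ^ (2 * ν - 1) * g' (x ^ (2 * ν)))
      (2 * ν * ((2 * ν - 1) * r ^ (2 * ν - 1 - 1)) * g' (r ^ (2 * ν))
        + 2 * ν * r ^ (2 * ν - 1) * (2 * ν * r ^ (2 * ν - 1) * g'')) r :=
    ((Real.hasDerivAt_rpow_const (Or.inl hr.ne')).const_mul (2 * ν)).mul hcomp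
  rw [besselLaplacian_rpow_mul hr (hasDerivAt_comp_rpow hr hg) hh',
    Real.rpow_sub_one hr.ne' (2 * ν - 1)]
  field_simp
  ring

theorem v0fun_eventuallyEq {ν γ t r : ℝ} (hr : 0 < r) :
    v0fun ν γ t =ᶠ[𝓝 r]
      fun x => x ^ (-ν) * (fun s => (max (1 - t) 0 + s) ^ (ν / (2 * γ))) (x ^ (2 * ν)) := by
  filter_upwards [Ioi_mem_nhds hr] with x hx
  rw [v0fun, Real.rpow_neg (le_of_lt hx), div_eq_inv_mul]

theorem besselLaplacian_v0fun {ν γ t r : ℝ} (hγ : γ ≠ 0) (hr : 0 < r) :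
    besselLaplacian ν (v0fun ν γ t) r = ν ^ 3 / γ ^ 2 * v0fun ν γ t r *
      (r ^ (4 * ν - 2) * (ν - 2 * γ) / (max (1 - t) 0 + r ^ (2 * ν)) ^ 2) := by
  set c := max (1 - t) 0
  set a := ν / (2 * γ)
  have hA : 0 < c + r ^ (2 * ν) := by positivity
  have hg : ∀ᶠ s in 𝓝 (r ^ (2 * ν)),
      HasDerivAt (fun s => (c + s) ^ a) (a * (c + s) ^ (a - 1)) s := by
    filter_upwards [(continuous_const.add continuous_id).continuousAt.eventually (lt_mem_nhds hA)]
      with s hs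
    exact (Real.hasDerivAt_rpow_const (Or.inl hs.ne')).comp_const_add c s
  have hg' : HasDerivAt (fun s => a * (c + s) ^ (a - 1))
      (a * ((a - 1) * (c + r ^ (2 * ν)) ^ (a - 1 - 1))) (r ^ (2 * ν)) :=
    ((Real.hasDerivAt_rpow_const (Or.inl hA.ne')).comp_const_add c _).const_mul a
  have hpow : r ^ (4 * ν - 2) = (r ^ (2 * ν) / r) ^ 2 := by
    rw [← Real.rpow_sub_one hr.ne', ← Real.rpow_natCast, ← Real.rpow_mul hr.le]
    ring_nf
  rw [besselLaplacian_congr (v0fun_eventuallyEq hr),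
    besselLaplacian_rpow_neg_mul_comp_rpow hr hg hg', v0fun, hpow, Real.rpow_neg hr.le,
    Real.rpow_sub_one hr.ne']
  simp only [a, c, Real.rpow_sub_one hA.ne']
  field_simp

theorem v0fun_nonneg (ν γ t : ℝ) {r : ℝ} (hr : 0 < r) : 0 ≤ v0fun ν γ t r :=
  div_nonneg (Real.rpow_nonneg (by positivity) _) (by positivity)

theorem stmt13 (γ ν t r : ℝ) (hγ : 1 / 2 ≤ γ) (hγν : γ < ν) (hν : ν ≤ 1) (hr : 0 < r) :
    deriv (deriv (v0fun ν γ t)) r + r⁻¹ * deriv (v0fun ν γ t) r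
        - ν ^ 2 / r ^ 2 * v0fun ν γ t r =
      ν ^ 3 / γ ^ 2 * v0fun ν γ t r *
        (r ^ (4 * ν - 2) * (ν - 2 * γ) / (max (1 - t) 0 + r ^ (2 * ν)) ^ 2) ∧
    deriv (deriv (v0fun ν γ t)) r + r⁻¹ * deriv (v0fun ν γ t) r
        - ν ^ 2 / r ^ 2 * v0fun ν γ t r ≤ 0 := by
  have hγ0 : 0 < γ := by linarith
  have hν0 : 0 < ν := by linarith
  change besselLaplacian ν (v0fun ν γ t) r = _ ∧ besselLaplacian ν (v0fun ν γ t) r ≤ 0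
  rw [besselLaplacian_v0fun hγ0.ne' hr]
  refine ⟨rfl, mul_nonpos_of_nonneg_of_nonpos ?_ ?_⟩
  · exact mul_nonneg (by positivity) (v0fun_nonneg ν γ t hr)
  · exact div_nonpos_of_nonpos_of_nonneg
      (mul_nonpos_of_nonneg_of_nonpos (by positivity) (by linarith)) (by positivity)
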